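/- arXiv:2006.15681 — 4 statements merged into one kernel-verified Lean document; each statement's English description precedes it below -/
import Mathlib

section
/- Identification of the history-conditional counterfactual outcome mean under censoring (display (25) in the proof of Theorem 1). Under the censored-data identifying assumptions (Exchangeability-1, Exchangeability-2, Consistency, Positivity), for every a ∈ {0,1} and every history l̄_K for which all conditioning events below have positive probability: E(Y^{a,c̄=0} | D^{a,c̄=0}_{K+1}=0, L̄^{a,c̄=0}_K=l̄_K) = E(Y | D_{K+1}=0, C_{K+1}=0, L̄_K=l̄_K, A=a). -/
open MeasureTheory ProbabilityTheory
set_option autoImplicit false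
set_option maxHeartbeats 1000000

private lemma arith_cancel (A B Cc f : ℝ) (hf : f ≠ 0) (h : A / f = B / f * (Cc / f)) :
    A = B * (Cc / f) := by
  have h2 : A * (f * f) = B * Cc * f := by field_simp at h; linear_combination f * h
  have h3 : A * f = B * Cc := by
    have := mul_right_cancel₀ hf (by ring_nf; ring_nf at h2; linarith : A * f * f = B * Cc * f)
    exact this
  field_simp
  linarith

private lemma sum_repr {Ω : Type*} [MeasurableSpace Ω] (P : Measure Ω) [IsFiniteMeasure P]
    (𝓨 : Finset ℝ) (X : Ω → ℝ) (hX : Measurable X) (h : ∀ ω, X ω ∈ 𝓨) (g : ℝ → ℝ)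
    (F : Set Ω) :
    ∫ ω in F, g (X ω) ∂P = ∑ y ∈ 𝓨, g y * (P ({ω | X ω = y} ∩ F)).toReal := by
  have hms : ∀ y : ℝ, MeasurableSet {ω | X ω = y} := fun y => hX (measurableSet_singleton y)
  have hpt : ∀ ω, g (X ω) = ∑ y ∈ 𝓨, Set.indicator {ω' | X ω' = y} (fun _ => g y) ω := by
    intro ω
    rw [Finset.sum_eq_single (X ω)]
    · exact (Set.indicator_of_mem (show X ω = X ω from rfl) _).symm
    · intro b _ hb
      exact Set.indicator_of_notMem (show ¬ X ω = b from fun hh => hb hh.symm) _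
    · intro hmem; exact absurd (h ω) hmem
  calc ∫ ω in F, g (X ω) ∂P
      = ∫ ω in F, (∑ y ∈ 𝓨, Set.indicator {ω' | X ω' = y} (fun _ => g y) ω) ∂P := by
        exact integral_congr_ae (Filter.Eventually.of_forall fun ω => hpt ω)
    _ = ∑ y ∈ 𝓨, ∫ ω in F, Set.indicator {ω' | X ω' = y} (fun _ => g y) ω ∂P := by
        refine integral_finset_sum _ fun y _ => ?_
        exact (integrable_const (g y)).indicator (hms y)
    _ = ∑ y ∈ 𝓨, g y * (P ({ω | X ω = y} ∩ F)).toReal := by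
        refine Finset.sum_congr rfl fun y _ => ?_
        rw [setIntegral_indicator (hms y), setIntegral_const, Set.inter_comm, smul_eq_mul,
          mul_comm]
        rfl


/-- Conditional probability of the event `E` given the event `F`: `P(E ∩ F)/P(F)`. -/
noncomputable def condP {Ω : Type*} [MeasurableSpace Ω] (P : Measure Ω) (E F : Set Ω) : ℝ :=
  (P (E ∩ F)).toReal / (P F).toReal

/-- Conditional expectation of `X` given the event `F`: `E(X · 1_F)/P(F)`. -/
noncomputable def condE {Ω : Type*} [MeasurableSpace Ω] (P : Measure Ω) (X : Ω → ℝ) (F : Set Ω) : ℝ :=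
  (∫ ω in F, X ω ∂P) / (P F).toReal

/-- identification of the history-conditional counterfactual outcome mean under
censoring (display (25) in the proof of Theorem 1).
`Yc a, Dc a k, Lc a k` denote the counterfactuals `Y^{a,c̄=0}, D^{a,c̄=0}_k, L^{a,c̄=0}_k`. -/
theorem stmt_3
    {Ω : Type*} [MeasurableSpace Ω] (P : Measure Ω) [IsProbabilityMeasure P]
    (K : ℕ) (𝓛 : ℕ → Type) [∀ k, Fintype (𝓛 k)] [∀ k, Nonempty (𝓛 k)]
    [∀ k, DecidableEq (𝓛 k)] [∀ k, MeasurableSpace (𝓛 k)]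
    (𝓨 : Finset ℝ)
    (A : Ω → Fin 2) (L : (k : ℕ) → Ω → 𝓛 k) (D C : ℕ → Ω → ℕ) (Y : Ω → ℝ)
    (Yc : Fin 2 → Ω → ℝ) (Dc : Fin 2 → ℕ → Ω → ℕ) (Lc : Fin 2 → (k : ℕ) → Ω → 𝓛 k)
    -- measurability
    (hmA : Measurable A) (hmL : ∀ k, Measurable (L k)) (hmD : ∀ k, Measurable (D k))
    (hmC : ∀ k, Measurable (C k)) (hmY : Measurable Y)
    (hmYc : ∀ a, Measurable (Yc a)) (hmDc : ∀ a k, Measurable (Dc a k))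
    (hmLc : ∀ a k, Measurable (Lc a k))
    -- structural assumptions
    (hY𝓨 : ∀ ω, Y ω ∈ 𝓨) (hYc𝓨 : ∀ a ω, Yc a ω ∈ 𝓨)
    (hD0 : ∀ ω, D 0 ω = 0) (hD1 : ∀ k ω, D k ω ≤ 1) (hDmono : ∀ k ω, D k ω ≤ D (k+1) ω)
    (hC0 : ∀ ω, C 0 ω = 0) (hC1 : ∀ k ω, C k ω ≤ 1) (hCmono : ∀ k ω, C k ω ≤ C (k+1) ω)
    (hDc0 : ∀ a ω, Dc a 0 ω = 0) (hDc1 : ∀ a k ω, Dc a k ω ≤ 1)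
    (hDcmono : ∀ a k ω, Dc a k ω ≤ Dc a (k+1) ω)
    (hLc0 : ∀ a ω, Lc a 0 ω = L 0 ω)
    -- Exchangeability-1: given {L₀ = l₀}, (Y^{a,c̄=0}, D̲^{a,c̄=0}, L̲^{a,c̄=0}) ⫫ A
    (hExch1 : ∀ a : Fin 2, ∀ l0 : 𝓛 0, 0 < P {ω | L 0 ω = l0} →
      ∀ (y : ℝ) (d : ℕ → ℕ) (lv : (k : ℕ) → 𝓛 k) (a' : Fin 2),
        condP P ({ω | Yc a ω = y ∧ (∀ k, 1 ≤ k → k ≤ K + 1 → Dc a k ω = d k)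
              ∧ (∀ k, 1 ≤ k → k ≤ K → Lc a k ω = lv k)} ∩ {ω | A ω = a'})
            {ω | L 0 ω = l0}
          = condP P {ω | Yc a ω = y ∧ (∀ k, 1 ≤ k → k ≤ K + 1 → Dc a k ω = d k)
              ∧ (∀ k, 1 ≤ k → k ≤ K → Lc a k ω = lv k)} {ω | L 0 ω = l0}
            * condP P {ω | A ω = a'} {ω | L 0 ω = l0})
    -- Exchangeability-2: given {D_k=0, C_k=0, L̄_k=l̄_k, A=a}, the future counterfactuals ⫫ C_{k+1}
    (hExch2 : ∀ a : Fin 2, ∀ k ≤ K, ∀ l : (j : ℕ) → 𝓛 j,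
      0 < P ({ω | D k ω = 0} ∩ {ω | C k ω = 0} ∩ {ω | ∀ j ≤ k, L j ω = l j} ∩ {ω | A ω = a}) →
      ∀ (y : ℝ) (d : ℕ → ℕ) (lv : (j : ℕ) → 𝓛 j) (c : ℕ),
        condP P ({ω | Yc a ω = y ∧ (∀ j, k + 1 ≤ j → j ≤ K + 1 → Dc a j ω = d j)
              ∧ (∀ j, k + 1 ≤ j → j ≤ K → Lc a j ω = lv j)} ∩ {ω | C (k+1) ω = c})
            ({ω | D k ω = 0} ∩ {ω | C k ω = 0} ∩ {ω | ∀ j ≤ k, L j ω = l j} ∩ {ω | A ω = a})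
          = condP P {ω | Yc a ω = y ∧ (∀ j, k + 1 ≤ j → j ≤ K + 1 → Dc a j ω = d j)
              ∧ (∀ j, k + 1 ≤ j → j ≤ K → Lc a j ω = lv j)}
            ({ω | D k ω = 0} ∩ {ω | C k ω = 0} ∩ {ω | ∀ j ≤ k, L j ω = l j} ∩ {ω | A ω = a})
            * condP P {ω | C (k+1) ω = c}
              ({ω | D k ω = 0} ∩ {ω | C k ω = 0} ∩ {ω | ∀ j ≤ k, L j ω = l j} ∩ {ω | A ω = a}))
    -- Consistency
    (hcons : ∀ a : Fin 2, ∀ k ≤ K, ∀ ω, A ω = a → C (k+1) ω = 0 →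
      (∀ j ≤ k + 1, D j ω = Dc a j ω) ∧ (∀ j ≤ k + 1, j ≤ K → L j ω = Lc a j ω))
    (hconsY : ∀ a : Fin 2, ∀ ω, A ω = a → C (K+1) ω = 0 → Y ω = Yc a ω)
    -- Positivity
    (hpos1 : ∀ a : Fin 2, ∀ l0 : 𝓛 0, 0 < P {ω | L 0 ω = l0} →
      0 < P ({ω | A ω = a} ∩ {ω | L 0 ω = l0}))
    (hpos2 : ∀ a : Fin 2, ∀ k ≤ K, ∀ l : (j : ℕ) → 𝓛 j,
      0 < P ({ω | D (k+1) ω = 0} ∩ {ω | C (k+1) ω = 0} ∩ {ω | ∀ j ≤ k, L j ω = l j}) →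
      0 < P ({ω | A ω = a} ∩ {ω | D (k+1) ω = 0} ∩ {ω | C (k+1) ω = 0}
              ∩ {ω | ∀ j ≤ k, L j ω = l j}))
    (hpos3 : ∀ a : Fin 2, ∀ k ≤ K, ∀ l : (j : ℕ) → 𝓛 j,
      0 < P ({ω | A ω = a} ∩ {ω | D k ω = 0} ∩ {ω | C k ω = 0} ∩ {ω | ∀ j ≤ k, L j ω = l j}) →
      0 < P ({ω | C (k+1) ω = 0} ∩ {ω | A ω = a} ∩ {ω | D k ω = 0} ∩ {ω | C k ω = 0}
              ∩ {ω | ∀ j ≤ k, L j ω = l j})) :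
    -- conclusion: display (25)
    ∀ a : Fin 2, ∀ l : (j : ℕ) → 𝓛 j,
      0 < P ({ω | Dc a (K+1) ω = 0} ∩ {ω | ∀ j ≤ K, Lc a j ω = l j}) →
      0 < P ({ω | D (K+1) ω = 0} ∩ {ω | C (K+1) ω = 0} ∩ {ω | ∀ j ≤ K, L j ω = l j}
              ∩ {ω | A ω = a}) →
      condE P (Yc a) ({ω | Dc a (K+1) ω = 0} ∩ {ω | ∀ j ≤ K, Lc a j ω = l j})
        = condE P Y
            ({ω | D (K+1) ω = 0} ∩ {ω | C (K+1) ω = 0} ∩ {ω | ∀ j ≤ K, L j ω = l j}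
              ∩ {ω | A ω = a}) := by
  
  intro a l hS hT
  -- monotonicity helpers
  have hDle : ∀ (ω : Ω) (m n : ℕ), m ≤ n → D m ω ≤ D n ω := by
    intro ω m n h
    induction n, h using Nat.le_induction with
    | base => exact le_rfl
    | succ n hn ih => exact ih.trans (hDmono n ω)
  have hCle : ∀ (ω : Ω) (m n : ℕ), m ≤ n → C m ω ≤ C n ω := by
    intro ω m n h
    induction n, h using Nat.le_induction with
    | base => exact le_rfl
    | succ n hn ih => exact ih.trans (hCmono n ω)
  have hDcle : ∀ (ω : Ω) (m n : ℕ), m ≤ n → Dc a m ω ≤ Dc a n ω := by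
    intro ω m n h
    induction n, h using Nat.le_induction with
    | base => exact le_rfl
    | succ n hn ih => exact ih.trans (hDcmono a n ω)
  -- combined consistency helper
  have hcons' : ∀ k, k ≤ K + 1 → ∀ ω, A ω = a → C k ω = 0 →
      (∀ j, j ≤ k → D j ω = Dc a j ω) ∧ (∀ j, j ≤ k → j ≤ K → L j ω = Lc a j ω) := by
    intro k hk ω hA hC
    cases k with
    | zero =>
      constructor
      · intro j hj; have hj0 : j = 0 := Nat.le_zero.mp hj; subst hj0; rw [hD0, hDc0]
      · intro j hj _; have hj0 : j = 0 := Nat.le_zero.mp hj; subst hj0; exact (hLc0 a ω).symm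
    | succ m => exact hcons a m (by omega) ω hA hC
  -- positivity helpers
  have hL0pos : 0 < P {ω | L 0 ω = l 0} := by
    refine lt_of_lt_of_le hT (measure_mono ?_)
    rintro ω ⟨⟨⟨hD, hC⟩, hL⟩, hA⟩
    exact hL 0 (Nat.zero_le K)
  have hfL0 : (P {ω | L 0 ω = l 0}).toReal ≠ 0 :=
    ENNReal.toReal_ne_zero.mpr ⟨hL0pos.ne', measure_ne_top P _⟩
  have hGpos : ∀ k, k ≤ K →
      0 < P ({ω | D k ω = 0} ∩ {ω | C k ω = 0} ∩ {ω | ∀ j ≤ k, L j ω = l j} ∩ {ω | A ω = a}) := by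
    intro k hk
    refine lt_of_lt_of_le hT (measure_mono ?_)
    rintro ω ⟨⟨⟨hD, hC⟩, hL⟩, hA⟩
    refine ⟨⟨⟨?_, ?_⟩, fun j hj => hL j (hj.trans hk)⟩, hA⟩
    · exact Nat.le_zero.mp (le_trans (hDle ω k (K+1) (by omega)) (le_of_eq hD))
    · exact Nat.le_zero.mp (le_trans (hCle ω k (K+1) (by omega)) (le_of_eq hC))
  -- main induction: display (24)-(25) chain
  have main : ∀ k, k ≤ K + 1 → ∃ π : ℝ, ∀ y : ℝ,
      (P ({ω | Yc a ω = y ∧ (∀ j, 1 ≤ j → j ≤ K + 1 → Dc a j ω = 0) ∧ (∀ j, 1 ≤ j → j ≤ K → Lc a j ω = l j)} ∩ {ω | L 0 ω = l 0} ∩ {ω | A ω = a} ∩ {ω | C (k) ω = 0})).toReal = π * (P ({ω | Yc a ω = y ∧ (∀ j, 1 ≤ j → j ≤ K + 1 → Dc a j ω = 0) ∧ (∀ j, 1 ≤ j → j ≤ K → Lc a j ω = l j)} ∩ {ω | L 0 ω = l 0})).toReal := by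
    intro k
    induction k with
    | zero =>
      intro _
      refine ⟨(P ({ω | A ω = a} ∩ {ω | L 0 ω = l 0})).toReal / (P {ω | L 0 ω = l 0}).toReal, fun y => ?_⟩
      have h1 : condP P ({ω | Yc a ω = y ∧ (∀ j, 1 ≤ j → j ≤ K + 1 → Dc a j ω = 0) ∧ (∀ j, 1 ≤ j → j ≤ K → Lc a j ω = l j)} ∩ {ω | A ω = a}) {ω | L 0 ω = l 0}
          = condP P {ω | Yc a ω = y ∧ (∀ j, 1 ≤ j → j ≤ K + 1 → Dc a j ω = 0) ∧ (∀ j, 1 ≤ j → j ≤ K → Lc a j ω = l j)} {ω | L 0 ω = l 0} * condP P {ω | A ω = a} {ω | L 0 ω = l 0} :=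
        hExch1 a (l 0) hL0pos y (fun _ => 0) l a
      simp only [condP] at h1
      have h2 := arith_cancel _ _ _ _ hfL0 h1
      have hset0 : {ω | Yc a ω = y ∧ (∀ j, 1 ≤ j → j ≤ K + 1 → Dc a j ω = 0) ∧ (∀ j, 1 ≤ j → j ≤ K → Lc a j ω = l j)} ∩ {ω | L 0 ω = l 0} ∩ {ω | A ω = a} ∩ {ω | C (0) ω = 0} = ({ω | Yc a ω = y ∧ (∀ j, 1 ≤ j → j ≤ K + 1 → Dc a j ω = 0) ∧ (∀ j, 1 ≤ j → j ≤ K → Lc a j ω = l j)} ∩ {ω | A ω = a}) ∩ {ω | L 0 ω = l 0} := by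
        ext ω
        simp only [Set.mem_inter_iff, Set.mem_setOf_eq, hC0]
        tauto
      rw [hset0, h2]
      ring
    | succ k ih =>
      intro hk1
      have hk : k ≤ K := by omega
      obtain ⟨π, hπ⟩ := ih (by omega)
      have hGp := hGpos k hk
      have hfG : (P ({ω | D k ω = 0} ∩ {ω | C k ω = 0} ∩ {ω | ∀ j ≤ k, L j ω = l j} ∩ {ω | A ω = a})).toReal ≠ 0 :=
        ENNReal.toReal_ne_zero.mpr ⟨hGp.ne', measure_ne_top P _⟩
      refine ⟨π * ((P ({ω | C (k+1) ω = 0} ∩ ({ω | D k ω = 0} ∩ {ω | C k ω = 0} ∩ {ω | ∀ j ≤ k, L j ω = l j} ∩ {ω | A ω = a}))).toReal / (P ({ω | D k ω = 0} ∩ {ω | C k ω = 0} ∩ {ω | ∀ j ≤ k, L j ω = l j} ∩ {ω | A ω = a})).toReal), fun y => ?_⟩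
      have h1 : condP P (({ω | Yc a ω = y ∧ (∀ j, k + 1 ≤ j → j ≤ K + 1 → Dc a j ω = 0) ∧ (∀ j, k + 1 ≤ j → j ≤ K → Lc a j ω = l j)} ∩ {ω | C (k+1) ω = 0})) ({ω | D k ω = 0} ∩ {ω | C k ω = 0} ∩ {ω | ∀ j ≤ k, L j ω = l j} ∩ {ω | A ω = a})
          = condP P {ω | Yc a ω = y ∧ (∀ j, k + 1 ≤ j → j ≤ K + 1 → Dc a j ω = 0) ∧ (∀ j, k + 1 ≤ j → j ≤ K → Lc a j ω = l j)} ({ω | D k ω = 0} ∩ {ω | C k ω = 0} ∩ {ω | ∀ j ≤ k, L j ω = l j} ∩ {ω | A ω = a}) * condP P {ω | C (k+1) ω = 0} ({ω | D k ω = 0} ∩ {ω | C k ω = 0} ∩ {ω | ∀ j ≤ k, L j ω = l j} ∩ {ω | A ω = a}) :=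
        hExch2 a k hk l hGp y (fun _ => 0) l 0
      simp only [condP] at h1
      have h2 := arith_cancel _ _ _ _ hfG h1
      have hid1 : {ω | Yc a ω = y ∧ (∀ j, k + 1 ≤ j → j ≤ K + 1 → Dc a j ω = 0) ∧ (∀ j, k + 1 ≤ j → j ≤ K → Lc a j ω = l j)} ∩ ({ω | D k ω = 0} ∩ {ω | C k ω = 0} ∩ {ω | ∀ j ≤ k, L j ω = l j} ∩ {ω | A ω = a}) = {ω | Yc a ω = y ∧ (∀ j, 1 ≤ j → j ≤ K + 1 → Dc a j ω = 0) ∧ (∀ j, 1 ≤ j → j ≤ K → Lc a j ω = l j)} ∩ {ω | L 0 ω = l 0} ∩ {ω | A ω = a} ∩ {ω | C (k) ω = 0} := by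
        ext ω
        simp only [Set.mem_inter_iff, Set.mem_setOf_eq]
        constructor
        · rintro ⟨⟨hy, hd, hl⟩, ⟨⟨hDk, hCk⟩, hLk⟩, hA⟩
          have hco := hcons' k (by omega) ω hA hCk
          refine ⟨⟨⟨⟨hy, ?_, ?_⟩, hLk 0 (Nat.zero_le k)⟩, hA⟩, hCk⟩
          · intro j h1j hjK1
            rcases le_or_gt (k+1) j with hj | hj
            · exact hd j hj hjK1
            · have hDj : D j ω = 0 :=
                Nat.le_zero.mp (le_trans (hDle ω j k (by omega)) (le_of_eq hDk))
              rw [← hco.1 j (by omega)]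
              exact hDj
          · intro j h1j hjK
            rcases le_or_gt (k+1) j with hj | hj
            · exact hl j hj hjK
            · rw [← hco.2 j (by omega) hjK]
              exact hLk j (by omega)
        · rintro ⟨⟨⟨⟨hy, hd, hl⟩, hL0m⟩, hA⟩, hCk⟩
          have hco := hcons' k (by omega) ω hA hCk
          have hDk : D k ω = 0 := by
            rcases Nat.eq_zero_or_pos k with h0 | h0
            · subst h0; exact hD0 ω
            · rw [hco.1 k le_rfl]; exact hd k h0 (by omega)
          refine ⟨⟨hy, fun j hj hjK1 => hd j (by omega) hjK1,
              fun j hj hjK => hl j (by omega) hjK⟩, ⟨⟨hDk, hCk⟩, ?_⟩, hA⟩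
          intro j hjk
          rcases Nat.eq_zero_or_pos j with h0 | h0
          · subst h0; exact hL0m
          · rw [hco.2 j hjk (by omega)]; exact hl j h0 (by omega)
      have hid2 : ({ω | Yc a ω = y ∧ (∀ j, k + 1 ≤ j → j ≤ K + 1 → Dc a j ω = 0) ∧ (∀ j, k + 1 ≤ j → j ≤ K → Lc a j ω = l j)} ∩ {ω | C (k+1) ω = 0}) ∩ ({ω | D k ω = 0} ∩ {ω | C k ω = 0} ∩ {ω | ∀ j ≤ k, L j ω = l j} ∩ {ω | A ω = a}) = {ω | Yc a ω = y ∧ (∀ j, 1 ≤ j → j ≤ K + 1 → Dc a j ω = 0) ∧ (∀ j, 1 ≤ j → j ≤ K → Lc a j ω = l j)} ∩ {ω | L 0 ω = l 0} ∩ {ω | A ω = a} ∩ {ω | C (k+1) ω = 0} := by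
        ext ω
        constructor
        · rintro ⟨⟨hF, hC1⟩, hG⟩
          have hmem := (Set.ext_iff.mp hid1 ω).mp ⟨hF, hG⟩
          exact ⟨hmem.1, hC1⟩
        · rintro ⟨hWLA, hC1⟩
          have hCk : C k ω = 0 :=
            Nat.le_zero.mp (le_trans (hCle ω k (k+1) (Nat.le_succ k)) (le_of_eq hC1))
          have hmem := (Set.ext_iff.mp hid1 ω).mpr ⟨hWLA, hCk⟩
          exact ⟨⟨hmem.1, hC1⟩, hmem.2⟩
      rw [← hid2, h2, hid1, hπ y]
      ring
  obtain ⟨π, hπ⟩ := main (K+1) le_rfl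
  -- set identities for S and T
  have hSy : ∀ y : ℝ, {ω | Yc a ω = y} ∩ ({ω | Dc a (K+1) ω = 0} ∩ {ω | ∀ j ≤ K, Lc a j ω = l j}) = {ω | Yc a ω = y ∧ (∀ j, 1 ≤ j → j ≤ K + 1 → Dc a j ω = 0) ∧ (∀ j, 1 ≤ j → j ≤ K → Lc a j ω = l j)} ∩ {ω | L 0 ω = l 0} := by
    intro y
    ext ω
    simp only [Set.mem_inter_iff, Set.mem_setOf_eq]
    constructor
    · rintro ⟨hy, hDK, hL⟩
      refine ⟨⟨hy, ?_, fun j h1 h2 => hL j h2⟩, ?_⟩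
      · intro j h1 h2
        exact Nat.le_zero.mp (le_trans (hDcle ω j (K+1) h2) (le_of_eq hDK))
      · rw [← hLc0 a ω]; exact hL 0 (Nat.zero_le K)
    · rintro ⟨⟨hy, hd, hl⟩, hL0m⟩
      refine ⟨hy, hd (K+1) (by omega) le_rfl, ?_⟩
      intro j hj
      rcases Nat.eq_zero_or_pos j with h0 | h0
      · subst h0; rw [hLc0 a ω]; exact hL0m
      · exact hl j h0 hj
  have hTy : ∀ y : ℝ, {ω | Yc a ω = y} ∩ ({ω | D (K+1) ω = 0} ∩ {ω | C (K+1) ω = 0} ∩ {ω | ∀ j ≤ K, L j ω = l j} ∩ {ω | A ω = a}) = {ω | Yc a ω = y ∧ (∀ j, 1 ≤ j → j ≤ K + 1 → Dc a j ω = 0) ∧ (∀ j, 1 ≤ j → j ≤ K → Lc a j ω = l j)} ∩ {ω | L 0 ω = l 0} ∩ {ω | A ω = a} ∩ {ω | C (K+1) ω = 0} := by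
    intro y
    ext ω
    simp only [Set.mem_inter_iff, Set.mem_setOf_eq]
    constructor
    · rintro ⟨hy, ⟨⟨hD, hC⟩, hL⟩, hA⟩
      have hco := hcons' (K+1) le_rfl ω hA hC
      refine ⟨⟨⟨⟨hy, ?_, ?_⟩, hL 0 (Nat.zero_le K)⟩, hA⟩, hC⟩
      · intro j h1 h2
        rw [← hco.1 j h2]
        exact Nat.le_zero.mp (le_trans (hDle ω j (K+1) h2) (le_of_eq hD))
      · intro j h1 h2
        rw [← hco.2 j (by omega) h2]
        exact hL j h2
    · rintro ⟨⟨⟨⟨hy, hd, hl⟩, hL0m⟩, hA⟩, hC⟩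
      have hco := hcons' (K+1) le_rfl ω hA hC
      refine ⟨hy, ⟨⟨?_, hC⟩, ?_⟩, hA⟩
      · rw [hco.1 (K+1) le_rfl]
        exact hd (K+1) (by omega) le_rfl
      · intro j hj
        rcases Nat.eq_zero_or_pos j with h0 | h0
        · subst h0; exact hL0m
        · rw [hco.2 j (by omega) hj]; exact hl j h0 hj
  have hYT : ∀ y : ℝ, {ω | Y ω = y} ∩ ({ω | D (K+1) ω = 0} ∩ {ω | C (K+1) ω = 0} ∩ {ω | ∀ j ≤ K, L j ω = l j} ∩ {ω | A ω = a}) = {ω | Yc a ω = y} ∩ ({ω | D (K+1) ω = 0} ∩ {ω | C (K+1) ω = 0} ∩ {ω | ∀ j ≤ K, L j ω = l j} ∩ {ω | A ω = a}) := by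
    intro y
    ext ω
    simp only [Set.mem_inter_iff, Set.mem_setOf_eq]
    constructor
    · rintro ⟨hy, hTm⟩
      refine ⟨?_, hTm⟩
      rw [← hconsY a ω hTm.2 hTm.1.1.2]
      exact hy
    · rintro ⟨hy, hTm⟩
      refine ⟨?_, hTm⟩
      rw [hconsY a ω hTm.2 hTm.1.1.2]
      exact hy
  -- integral computations
  have hIS : ∫ ω in ({ω | Dc a (K+1) ω = 0} ∩ {ω | ∀ j ≤ K, Lc a j ω = l j}), Yc a ω ∂P = ∑ y ∈ 𝓨, y * (P ({ω | Yc a ω = y ∧ (∀ j, 1 ≤ j → j ≤ K + 1 → Dc a j ω = 0) ∧ (∀ j, 1 ≤ j → j ≤ K → Lc a j ω = l j)} ∩ {ω | L 0 ω = l 0})).toReal := by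
    have h0 := sum_repr P 𝓨 (Yc a) (hmYc a) (hYc𝓨 a) id ({ω | Dc a (K+1) ω = 0} ∩ {ω | ∀ j ≤ K, Lc a j ω = l j})
    simp only [id_eq] at h0
    rw [h0]
    exact Finset.sum_congr rfl fun y _ => by rw [hSy y]
  have hPS : (P ({ω | Dc a (K+1) ω = 0} ∩ {ω | ∀ j ≤ K, Lc a j ω = l j})).toReal = ∑ y ∈ 𝓨, (P ({ω | Yc a ω = y ∧ (∀ j, 1 ≤ j → j ≤ K + 1 → Dc a j ω = 0) ∧ (∀ j, 1 ≤ j → j ≤ K → Lc a j ω = l j)} ∩ {ω | L 0 ω = l 0})).toReal := by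
    have h0 := sum_repr P 𝓨 (Yc a) (hmYc a) (hYc𝓨 a) (fun _ => (1:ℝ)) ({ω | Dc a (K+1) ω = 0} ∩ {ω | ∀ j ≤ K, Lc a j ω = l j})
    calc (P ({ω | Dc a (K+1) ω = 0} ∩ {ω | ∀ j ≤ K, Lc a j ω = l j})).toReal = ∫ ω in ({ω | Dc a (K+1) ω = 0} ∩ {ω | ∀ j ≤ K, Lc a j ω = l j}), (fun _ : ℝ => (1:ℝ)) (Yc a ω) ∂P := by simp [measureReal_def]
      _ = ∑ y ∈ 𝓨, (fun _ : ℝ => (1:ℝ)) y * (P ({ω | Yc a ω = y} ∩ ({ω | Dc a (K+1) ω = 0} ∩ {ω | ∀ j ≤ K, Lc a j ω = l j}))).toReal := h0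
      _ = ∑ y ∈ 𝓨, (P ({ω | Yc a ω = y ∧ (∀ j, 1 ≤ j → j ≤ K + 1 → Dc a j ω = 0) ∧ (∀ j, 1 ≤ j → j ≤ K → Lc a j ω = l j)} ∩ {ω | L 0 ω = l 0})).toReal := by
          refine Finset.sum_congr rfl fun y _ => ?_
          rw [hSy y, one_mul]
  have hIT : ∫ ω in ({ω | D (K+1) ω = 0} ∩ {ω | C (K+1) ω = 0} ∩ {ω | ∀ j ≤ K, L j ω = l j} ∩ {ω | A ω = a}), Y ω ∂P = π * ∑ y ∈ 𝓨, y * (P ({ω | Yc a ω = y ∧ (∀ j, 1 ≤ j → j ≤ K + 1 → Dc a j ω = 0) ∧ (∀ j, 1 ≤ j → j ≤ K → Lc a j ω = l j)} ∩ {ω | L 0 ω = l 0})).toReal := by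
    have h0 := sum_repr P 𝓨 Y hmY hY𝓨 id ({ω | D (K+1) ω = 0} ∩ {ω | C (K+1) ω = 0} ∩ {ω | ∀ j ≤ K, L j ω = l j} ∩ {ω | A ω = a})
    simp only [id_eq] at h0
    rw [h0, Finset.mul_sum]
    refine Finset.sum_congr rfl fun y _ => ?_
    rw [hYT y, hTy y, hπ y]
    ring
  have hPT : (P ({ω | D (K+1) ω = 0} ∩ {ω | C (K+1) ω = 0} ∩ {ω | ∀ j ≤ K, L j ω = l j} ∩ {ω | A ω = a})).toReal = π * (P ({ω | Dc a (K+1) ω = 0} ∩ {ω | ∀ j ≤ K, Lc a j ω = l j})).toReal := by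
    have h0 := sum_repr P 𝓨 (Yc a) (hmYc a) (hYc𝓨 a) (fun _ => (1:ℝ)) ({ω | D (K+1) ω = 0} ∩ {ω | C (K+1) ω = 0} ∩ {ω | ∀ j ≤ K, L j ω = l j} ∩ {ω | A ω = a})
    calc (P ({ω | D (K+1) ω = 0} ∩ {ω | C (K+1) ω = 0} ∩ {ω | ∀ j ≤ K, L j ω = l j} ∩ {ω | A ω = a})).toReal = ∫ ω in ({ω | D (K+1) ω = 0} ∩ {ω | C (K+1) ω = 0} ∩ {ω | ∀ j ≤ K, L j ω = l j} ∩ {ω | A ω = a}), (fun _ : ℝ => (1:ℝ)) (Yc a ω) ∂P := by simp [measureReal_def]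
      _ = ∑ y ∈ 𝓨, (fun _ : ℝ => (1:ℝ)) y * (P ({ω | Yc a ω = y} ∩ ({ω | D (K+1) ω = 0} ∩ {ω | C (K+1) ω = 0} ∩ {ω | ∀ j ≤ K, L j ω = l j} ∩ {ω | A ω = a}))).toReal := h0
      _ = ∑ y ∈ 𝓨, π * (P ({ω | Yc a ω = y ∧ (∀ j, 1 ≤ j → j ≤ K + 1 → Dc a j ω = 0) ∧ (∀ j, 1 ≤ j → j ≤ K → Lc a j ω = l j)} ∩ {ω | L 0 ω = l 0})).toReal := by
          refine Finset.sum_congr rfl fun y _ => ?_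
          rw [hTy y, hπ y, one_mul]
      _ = π * (P ({ω | Dc a (K+1) ω = 0} ∩ {ω | ∀ j ≤ K, Lc a j ω = l j})).toReal := by rw [← Finset.mul_sum, hPS]
  have ht0 : (P ({ω | D (K+1) ω = 0} ∩ {ω | C (K+1) ω = 0} ∩ {ω | ∀ j ≤ K, L j ω = l j} ∩ {ω | A ω = a})).toReal ≠ 0 :=
    ENNReal.toReal_ne_zero.mpr ⟨hT.ne', measure_ne_top P _⟩
  have hπ0 : π ≠ 0 := by
    intro h
    apply ht0
    rw [hPT, h, zero_mul]
  simp only [condE]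
  rw [hPT, hIT, ← hIS, mul_div_mul_left _ _ hπ0]
end

section
/- The principal stratum effect equals a conditional separable effect under monotonicity and the modified treatment assumption (the first three equalities of display (16)). Assume: (Monotonicity) D^{1}_{K+1} ≤ D^{0}_{K+1} pointwise (almost surely), where D^{a}_{K+1} is the counterfactual event indicator under A=a; (Modified treatment assumption) for each a ∈ {0,1}, Y^{a,a} = Y^{a} almost surely and D^{a,a}_{K+1} = D^{a}_{K+1} almost surely; (Positivity) P(D^{0}_{K+1}=0) > 0. Then E( Y^{a=1} − Y^{a=0} | D^{1}_{K+1}=0, D^{0}_{K+1}=0 ) = E( Y^{a=1} − Y^{a=0} | D^{0}_{K+1}=0 ) = E( Y^{a_Y=1,a_D=1} − Y^{a_Y=0,a_D=0} | D^{a_Y=0,a_D=0}_{K+1}=0 ). -/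
open MeasureTheory ProbabilityTheory
set_option autoImplicit false

/-- the principal stratum effect equals a conditional separable effect
under monotonicity and the modified treatment assumption (first three equalities of
display (16)).  `Da a` stands for `D^a_{K+1}`, `Dad aY aD` for `D^{aY,aD}_{K+1}`. -/
theorem stmt_12
    {Ω : Type*} [MeasurableSpace Ω] (P : Measure Ω) [IsProbabilityMeasure P]
    (K : ℕ) (𝓨 : Finset ℝ)
    (Ya : Fin 2 → Ω → ℝ) (Da : Fin 2 → Ω → ℕ)
    (Yad : Fin 2 → Fin 2 → Ω → ℝ) (Dad : Fin 2 → Fin 2 → Ω → ℕ)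
    (hmYa : ∀ a, Measurable (Ya a)) (hmDa : ∀ a, Measurable (Da a))
    (hmYad : ∀ aY aD, Measurable (Yad aY aD)) (hmDad : ∀ aY aD, Measurable (Dad aY aD))
    (hYa𝓨 : ∀ a ω, Ya a ω ∈ 𝓨) (hYad𝓨 : ∀ aY aD ω, Yad aY aD ω ∈ 𝓨)
    (hDa1 : ∀ a ω, Da a ω ≤ 1) (hDad1 : ∀ aY aD ω, Dad aY aD ω ≤ 1)
    -- monotonicity: D^{1}_{K+1} ≤ D^{0}_{K+1} almost surely
    (hmono : ∀ᵐ ω ∂P, Da 1 ω ≤ Da 0 ω)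
    -- modified treatment assumption
    (hmtY : ∀ a : Fin 2, ∀ᵐ ω ∂P, Yad a a ω = Ya a ω)
    (hmtD : ∀ a : Fin 2, ∀ᵐ ω ∂P, Dad a a ω = Da a ω)
    -- positivity
    (hpos : 0 < P {ω | Da 0 ω = 0}) :
    condE P (fun ω => Ya 1 ω - Ya 0 ω) ({ω | Da 1 ω = 0} ∩ {ω | Da 0 ω = 0})
      = condE P (fun ω => Ya 1 ω - Ya 0 ω) {ω | Da 0 ω = 0}
    ∧ condE P (fun ω => Ya 1 ω - Ya 0 ω) {ω | Da 0 ω = 0}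
      = condE P (fun ω => Yad 1 1 ω - Yad 0 0 ω) {ω | Dad 0 0 ω = 0} := by
  have hset1 : ({ω | Da 1 ω = 0} ∩ {ω | Da 0 ω = 0} : Set Ω) =ᵐ[P] {ω | Da 0 ω = 0} := by
    apply Filter.eventuallyEq_set.mpr
    filter_upwards [hmono] with ω h
    simp only [Set.mem_inter_iff, Set.mem_setOf_eq]
    constructor
    · exact fun h' => h'.2
    · exact fun h' => ⟨Nat.le_zero.mp (h' ▸ h), h'⟩
  have hset2 : ({ω | Dad 0 0 ω = 0} : Set Ω) =ᵐ[P] {ω | Da 0 ω = 0} := by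
    apply Filter.eventuallyEq_set.mpr
    filter_upwards [hmtD 0] with ω h
    simp [Set.mem_setOf_eq, h]
  have hfun : (fun ω => Yad 1 1 ω - Yad 0 0 ω) =ᵐ[P] (fun ω => Ya 1 ω - Ya 0 ω) := by
    filter_upwards [hmtY 0, hmtY 1] with ω h0 h1
    rw [h0, h1]
  constructor
  · unfold condE
    rw [setIntegral_congr_set hset1, measure_congr hset1]
  · unfold condE
    rw [setIntegral_congr_set hset2, measure_congr hset2,
      integral_congr_ae (ae_restrict_of_ae hfun)]
end

section
/- Falsifiability of A_Y partial isolation in the four-arm trial G: under A_Y partial isolation, the observed conditional means of the post-treatment event indicator do not depend on the assigned value of A_Y. Assume, in the four-arm trial setting: (A_Y partial isolation) for all (a_Y,a_D) ∈ {0,1}² and all k ≤ K, D^{a_Y,a_D}_{k+1} = D^{0,a_D}_{k+1} pointwise (write D^{a_D}_{k+1} for this common variable). Then for every k ≤ K and every a_D ∈ {0,1} with P(A_Y=1, A_D=a_D) > 0 and P(A_Y=0, A_D=a_D) > 0: E( D_{k+1} | A_Y=1, A_D=a_D ) = E( D_{k+1} | A_Y=0, A_D=a_D ). -/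
open MeasureTheory ProbabilityTheory
set_option autoImplicit false

/-- falsifiability of `A_Y` partial isolation in the four-arm trial `G`:
under `A_Y` partial isolation the observed conditional means of the post-treatment event
indicator do not depend on the assigned value of `A_Y`. -/
theorem stmt_14
    {Ω : Type*} [MeasurableSpace Ω] (P : Measure Ω) [IsProbabilityMeasure P]
    (K : ℕ) (𝓛 : ℕ → Type) [∀ k, Fintype (𝓛 k)] [∀ k, Nonempty (𝓛 k)]
    [∀ k, DecidableEq (𝓛 k)] [∀ k, MeasurableSpace (𝓛 k)]
    (𝓨 : Finset ℝ)
    (AY AD : Ω → Fin 2)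
    (Yad : Fin 2 → Fin 2 → Ω → ℝ) (Dad : Fin 2 → Fin 2 → ℕ → Ω → ℕ)
    (Lad : Fin 2 → Fin 2 → (k : ℕ) → Ω → 𝓛 k)
    (L0 : Ω → 𝓛 0)
    (Y : Ω → ℝ) (D : ℕ → Ω → ℕ) (L : (k : ℕ) → Ω → 𝓛 k)
    -- measurability
    (hmAY : Measurable AY) (hmAD : Measurable AD)
    (hmYad : ∀ aY aD, Measurable (Yad aY aD)) (hmDad : ∀ aY aD k, Measurable (Dad aY aD k))
    (hmLad : ∀ aY aD k, Measurable (Lad aY aD k))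
    -- structural assumptions
    (hYad𝓨 : ∀ aY aD ω, Yad aY aD ω ∈ 𝓨)
    (hDad0 : ∀ aY aD ω, Dad aY aD 0 ω = 0) (hDad1 : ∀ aY aD k ω, Dad aY aD k ω ≤ 1)
    (hDadmono : ∀ aY aD k ω, Dad aY aD k ω ≤ Dad aY aD (k+1) ω)
    (hLad0 : ∀ aY aD ω, Lad aY aD 0 ω = L0 ω)
    -- consistency: the observed trial variables
    (hconsY : ∀ ω, Y ω = Yad (AY ω) (AD ω) ω)
    (hconsD : ∀ k ω, D k ω = Dad (AY ω) (AD ω) k ω)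
    (hconsL : ∀ k ω, L k ω = Lad (AY ω) (AD ω) k ω)
    -- randomization: (A_Y, A_D) independent of all counterfactual variables
    (hrand : IndepFun (fun ω => (AY ω, AD ω))
      (fun ω => (L0 ω, fun p : Fin 2 × Fin 2 =>
        (Yad p.1 p.2 ω, fun k : Fin (K+2) => Dad p.1 p.2 k.val ω,
          fun k : Fin (K+1) => Lad p.1 p.2 k.val ω))) P)
    -- A_Y partial isolation
    (hiso : ∀ aY aD : Fin 2, ∀ k ≤ K, ∀ ω, Dad aY aD (k+1) ω = Dad 0 aD (k+1) ω) :
    ∀ k ≤ K, ∀ aD : Fin 2,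
      0 < P ({ω | AY ω = 1} ∩ {ω | AD ω = aD}) →
      0 < P ({ω | AY ω = 0} ∩ {ω | AD ω = aD}) →
      condE P (fun ω => (D (k+1) ω : ℝ)) ({ω | AY ω = 1} ∩ {ω | AD ω = aD})
        = condE P (fun ω => (D (k+1) ω : ℝ)) ({ω | AY ω = 0} ∩ {ω | AD ω = aD}) := by
  intro k hk aD h1 h0
  -- common setup
  have hk2 : k + 1 < K + 2 := by omega
  set X : Ω → ℝ := fun ω => (Dad 0 aD (k+1) ω : ℝ) with hX
  -- measurability of X as a function of the counterfactual vector
  have key : ∀ aY : Fin 2, 0 < P ({ω | AY ω = aY} ∩ {ω | AD ω = aD}) →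
      condE P (fun ω => (D (k+1) ω : ℝ)) ({ω | AY ω = aY} ∩ {ω | AD ω = aD})
        = ∫ ω, X ω ∂P := by
    intro aY hpos
    set F : Set Ω := {ω | AY ω = aY} ∩ {ω | AD ω = aD} with hF
    have hFm : MeasurableSet F :=
      (hmAY (measurableSet_singleton aY)).inter (hmAD (measurableSet_singleton aD))
    -- indicator as a function of (AY, AD)
    set ψ : Fin 2 × Fin 2 → ℝ := ({(aY, aD)} : Set (Fin 2 × Fin 2)).indicator 1 with hψ
    have hψm : Measurable ψ := measurable_const.indicator (measurableSet_singleton _)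
    -- X as a measurable function of the counterfactual vector
    set T := (𝓛 0) × ((Fin 2 × Fin 2) →
      (ℝ × (Fin (K+2) → ℕ) × ((j : Fin (K+1)) → 𝓛 j.val))) with hT
    set φ : T → ℝ := fun v => ((v.2 (0, aD)).2.1 ⟨k+1, hk2⟩ : ℝ) with hφ
    have hφm : Measurable φ := by
      apply Measurable.comp (f := fun v : T => (v.2 (0, aD)).2.1 ⟨k+1, hk2⟩)
        (g := fun n : ℕ => (n : ℝ)) (measurable_from_top)
      exact (measurable_pi_apply _).comp
        (measurable_fst.comp (measurable_snd.comp
          ((measurable_pi_apply (0, aD)).comp measurable_snd)))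
    have hindep : IndepFun (fun ω => X ω) (fun ω => ψ (AY ω, AD ω)) P :=
      (hrand.comp hψm hφm).symm
    have hmul : (∫ ω, X ω * ψ (AY ω, AD ω) ∂P)
        = (∫ ω, X ω ∂P) * (∫ ω, ψ (AY ω, AD ω) ∂P) := by
      have hXm : AEStronglyMeasurable (fun ω => X ω) P :=
        (measurable_from_top.comp (hmDad 0 aD (k+1))).aestronglyMeasurable
      have hIm : AEStronglyMeasurable (fun ω => ψ (AY ω, AD ω)) P :=
        (hψm.comp (hmAY.prodMk hmAD)).aestronglyMeasurable
      exact hindep.integral_fun_mul_eq_mul_integral hXm hIm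
    -- identify integrals
    have hind_eq : ∀ ω, ψ (AY ω, AD ω) = F.indicator (fun _ => (1:ℝ)) ω := by
      intro ω
      by_cases hω : ω ∈ F
      · have h1' : AY ω = aY := hω.1
        have h2' : AD ω = aD := hω.2
        rw [Set.indicator_of_mem hω]
        simp [hψ, Set.indicator_of_mem, h1', h2', Prod.ext_iff]
      · rw [Set.indicator_of_notMem hω]
        have : (AY ω, AD ω) ∉ ({(aY, aD)} : Set (Fin 2 × Fin 2)) := by
          intro hc
          apply hω
          rw [Set.mem_singleton_iff, Prod.ext_iff] at hc
          exact ⟨hc.1, hc.2⟩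
        simp only [hψ, Set.indicator_of_notMem this]
    have hI2 : (∫ ω, ψ (AY ω, AD ω) ∂P) = (P F).toReal := by
      rw [show (fun ω => ψ (AY ω, AD ω)) = F.indicator (fun _ => (1:ℝ)) from funext hind_eq]
      rw [integral_indicator hFm]
      simp
      rfl
    have hsetint : (∫ ω in F, (D (k+1) ω : ℝ) ∂P) = ∫ ω in F, X ω ∂P := by
      apply setIntegral_congr_fun hFm
      intro ω hω
      obtain ⟨h1', h2'⟩ := hω
      simp only [Set.mem_setOf_eq] at h1' h2'
      simp only [hX, hconsD (k+1) ω, h1', h2', hiso aY aD k hk ω]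
    have hsetX : (∫ ω in F, X ω ∂P) = (∫ ω, X ω ∂P) * (P F).toReal := by
      rw [← integral_indicator hFm]
      rw [← hI2, ← hmul]
      congr 1
      funext ω
      by_cases hω : ω ∈ F
      · rw [Set.indicator_of_mem hω, hind_eq ω, Set.indicator_of_mem hω]; ring
      · rw [Set.indicator_of_notMem hω, hind_eq ω, Set.indicator_of_notMem hω]; ring
    have hPF : (P F).toReal ≠ 0 :=
      ENNReal.toReal_ne_zero.2 ⟨hpos.ne', (measure_lt_top P F).ne⟩
    unfold condE
    rw [hsetint, hsetX, mul_div_assoc, div_self hPF, mul_one]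
  rw [key 1 h1, key 0 h0]
end

section
/- Falsifiability of the modified treatment assumption in the six-arm trial G′: under the modified treatment assumption, the arm jointly assigning A_Y=a and A_D=a has the same mean outcomes as the arm assigning A=a. Assume: R : Ω → R_arms is independent of the vector of all counterfactual variables; consistency: on the event {R = arm(A=a)} one has Y = Y^a and D_k = D^a_k for all k, and on {R = arm(a_Y,a_D)} one has Y = Y^{a_Y,a_D} and D_k = D^{a_Y,a_D}_k for all k; (Modified treatment assumption) for each a ∈ {0,1}, Y^{a,a} = Y^a almost surely and D^{a,a}_k = D^a_k almost surely for all k. Then for every a ∈ {0,1} with P(R = arm(a,a)) > 0 and P(R = arm(A=a)) > 0: E( Y | R = arm(a,a) ) = E( Y | R = arm(A=a) ), and for every k ≤ K, E( D_{k+1} | R = arm(a,a) ) = E( D_{k+1} | R = arm(A=a) ). -/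
open MeasureTheory ProbabilityTheory
set_option autoImplicit false

/-- The six arms of the trial `G'`: `Sum.inl a` is the arm assigning the original
treatment `A = a`; `Sum.inr (aY, aD)` is the arm jointly assigning `A_Y = aY, A_D = aD`. -/
abbrev Arm : Type := Fin 2 ⊕ (Fin 2 × Fin 2)

instance : MeasurableSingletonClass Arm := by
  constructor
  intro r
  rw [measurableSet_sum_iff]
  rcases r with x | p
  · constructor
    · have h : (Sum.inl ⁻¹' ({Sum.inl x} : Set Arm) : Set (Fin 2)) = {x} := by ext; simp
      rw [h]; exact measurableSet_singleton x
    · have h : (Sum.inr ⁻¹' ({Sum.inl x} : Set Arm) : Set (Fin 2 × Fin 2)) = ∅ := by ext; simp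
      rw [h]; exact MeasurableSet.empty
  · constructor
    · have h : (Sum.inl ⁻¹' ({Sum.inr p} : Set Arm) : Set (Fin 2)) = ∅ := by ext; simp
      rw [h]; exact MeasurableSet.empty
    · have h : (Sum.inr ⁻¹' ({Sum.inr p} : Set Arm) : Set (Fin 2 × Fin 2)) = {p} := by ext; simp
      rw [h]; exact measurableSet_singleton p

/-- Key auxiliary: if `R` is independent of `Vf`, then for a bounded measurable `φ`,
the set integral of `φ ∘ Vf` over `{R = r}` factorizes. -/
lemma aux_setIntegral {Ω V : Type*} [MeasurableSpace Ω] [MeasurableSpace V]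
    (P : Measure Ω) [IsProbabilityMeasure P]
    {R : Ω → Arm} {Vf : Ω → V} (hR : Measurable R) (hVf : Measurable Vf)
    (hInd : IndepFun R Vf P)
    {φ : V → ℝ} (hφ : Measurable φ) {C : ℝ} (hb : ∀ ω, |φ (Vf ω)| ≤ C) (r : Arm) :
    ∫ ω in {ω | R ω = r}, φ (Vf ω) ∂P
      = (P {ω | R ω = r}).toReal * ∫ ω, φ (Vf ω) ∂P := by
  have hF : MeasurableSet {ω | R ω = r} := hR (measurableSet_singleton r)
  set g : Arm → ℝ := Set.indicator {r} (fun _ => 1) with hg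
  have hgm : Measurable g := measurable_const.indicator (measurableSet_singleton r)
  have hind2 : IndepFun (g ∘ R) (φ ∘ Vf) P := hInd.comp hgm hφ
  have hint1 : Integrable (g ∘ R) P := by
    apply (integrable_const (1:ℝ)).mono' ((hgm.comp hR).aestronglyMeasurable)
    refine ae_of_all _ fun ω => ?_
    by_cases h : R ω = r <;> simp [g, Set.indicator, h, Function.comp]
  have hint2 : Integrable (φ ∘ Vf) P := by
    apply (integrable_const C).mono' ((hφ.comp hVf).aestronglyMeasurable)
    exact ae_of_all _ fun ω => by simpa [Function.comp] using hb ω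
  have hmul := hind2.integral_mul_eq_mul_integral hint1.aestronglyMeasurable hint2.aestronglyMeasurable
  have h1 : (g ∘ R) * (φ ∘ Vf) = Set.indicator {ω | R ω = r} (fun ω => φ (Vf ω)) := by
    funext ω
    by_cases h : R ω = r <;> simp [g, Set.indicator, h, Function.comp]
  have h2 : (g ∘ R) = Set.indicator {ω | R ω = r} (fun _ => (1:ℝ)) := by
    funext ω
    by_cases h : R ω = r <;> simp [g, Set.indicator, h, Function.comp]
  rw [h1, h2] at hmul
  rw [integral_indicator hF, integral_indicator_const _ hF] at hmul
  rw [hmul, smul_eq_mul, mul_one]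
  rfl


/-- falsifiability of the modified treatment assumption in the six-arm
trial `G'`: under the modified treatment assumption, the arm jointly assigning
`A_Y = a, A_D = a` has the same mean outcomes as the arm assigning `A = a`. -/
theorem stmt_15
    {Ω : Type*} [MeasurableSpace Ω] (P : Measure Ω) [IsProbabilityMeasure P]
    (K : ℕ) (𝓨 : Finset ℝ)
    (Ya : Fin 2 → Ω → ℝ) (Da : Fin 2 → ℕ → Ω → ℕ)
    (Yad : Fin 2 → Fin 2 → Ω → ℝ) (Dad : Fin 2 → Fin 2 → ℕ → Ω → ℕ)
    (R : Ω → Arm) (Y : Ω → ℝ) (D : ℕ → Ω → ℕ)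
    -- measurability
    (hmR : Measurable R) (hmY : Measurable Y) (hmD : ∀ k, Measurable (D k))
    (hmYa : ∀ a, Measurable (Ya a)) (hmDa : ∀ a k, Measurable (Da a k))
    (hmYad : ∀ aY aD, Measurable (Yad aY aD)) (hmDad : ∀ aY aD k, Measurable (Dad aY aD k))
    -- structural assumptions
    (hYa𝓨 : ∀ a ω, Ya a ω ∈ 𝓨) (hYad𝓨 : ∀ aY aD ω, Yad aY aD ω ∈ 𝓨) (hY𝓨 : ∀ ω, Y ω ∈ 𝓨)
    (hDa0 : ∀ a ω, Da a 0 ω = 0) (hDa1 : ∀ a k ω, Da a k ω ≤ 1)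
    (hDamono : ∀ a k ω, Da a k ω ≤ Da a (k+1) ω)
    (hDad0 : ∀ aY aD ω, Dad aY aD 0 ω = 0) (hDad1 : ∀ aY aD k ω, Dad aY aD k ω ≤ 1)
    (hDadmono : ∀ aY aD k ω, Dad aY aD k ω ≤ Dad aY aD (k+1) ω)
    -- randomization: R independent of the vector of all counterfactual variables
    (hrand : IndepFun R
      (fun ω => (fun a : Fin 2 => (Ya a ω, fun k : Fin (K+2) => Da a k.val ω),
        fun p : Fin 2 × Fin 2 => (Yad p.1 p.2 ω, fun k : Fin (K+2) => Dad p.1 p.2 k.val ω))) P)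
    -- consistency
    (hconsA : ∀ a : Fin 2, ∀ ω, R ω = Sum.inl a →
      Y ω = Ya a ω ∧ ∀ k, D k ω = Da a k ω)
    (hconsAd : ∀ aY aD : Fin 2, ∀ ω, R ω = Sum.inr (aY, aD) →
      Y ω = Yad aY aD ω ∧ ∀ k, D k ω = Dad aY aD k ω)
    -- modified treatment assumption
    (hmtY : ∀ a : Fin 2, ∀ᵐ ω ∂P, Yad a a ω = Ya a ω)
    (hmtD : ∀ a : Fin 2, ∀ k, ∀ᵐ ω ∂P, Dad a a k ω = Da a k ω) :
    ∀ a : Fin 2,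
      0 < P {ω | R ω = Sum.inr (a, a)} → 0 < P {ω | R ω = Sum.inl a} →
      condE P Y {ω | R ω = Sum.inr (a, a)} = condE P Y {ω | R ω = Sum.inl a}
      ∧ ∀ k ≤ K,
        condE P (fun ω => (D (k+1) ω : ℝ)) {ω | R ω = Sum.inr (a, a)}
          = condE P (fun ω => (D (k+1) ω : ℝ)) {ω | R ω = Sum.inl a} := by
  intro a hp2 hp1
  set V := (Fin 2 → ℝ × (Fin (K+2) → ℕ)) × ((Fin 2 × Fin 2) → ℝ × (Fin (K+2) → ℕ)) with hV
  set Vf : Ω → V := fun ω => (fun a : Fin 2 => (Ya a ω, fun k : Fin (K+2) => Da a k.val ω),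
        fun p : Fin 2 × Fin 2 => (Yad p.1 p.2 ω, fun k : Fin (K+2) => Dad p.1 p.2 k.val ω))
    with hVfdef
  have hVf : Measurable Vf := by
    apply Measurable.prod
    · exact measurable_pi_lambda _ fun b => Measurable.prod (hmYa b)
        (measurable_pi_lambda _ fun k => hmDa b k.val)
    · exact measurable_pi_lambda _ fun p => Measurable.prod (hmYad p.1 p.2)
        (measurable_pi_lambda _ fun k => hmDad p.1 p.2 k.val)
  set F2 := {ω | R ω = Sum.inr (a, a)} with hF2
  set F1 := {ω | R ω = Sum.inl a} with hF1
  have hF2m : MeasurableSet F2 := hmR (measurableSet_singleton _)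
  have hF1m : MeasurableSet F1 := hmR (measurableSet_singleton _)
  have hp2' : (P F2).toReal ≠ 0 := by
    simp [ENNReal.toReal_ne_zero, hp2.ne', measure_ne_top]
  have hp1' : (P F1).toReal ≠ 0 := by
    simp [ENNReal.toReal_ne_zero, hp1.ne', measure_ne_top]
  set C : ℝ := ∑ y ∈ 𝓨, |y| with hCdef
  have hC : ∀ y ∈ 𝓨, |y| ≤ C := fun y hy =>
    Finset.single_le_sum (f := fun y => |y|) (fun i _ => abs_nonneg i) hy
  constructor
  · -- Y part
    have key2 : ∫ ω in F2, Yad a a ω ∂P = (P F2).toReal * ∫ ω, Yad a a ω ∂P := by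
      exact aux_setIntegral P hmR hVf hrand
        (φ := fun v : V => (v.2 (a, a)).1)
        (((measurable_pi_apply (a, a)).comp measurable_snd).fst)
        (C := C) (fun ω => hC _ (hYad𝓨 a a ω)) (Sum.inr (a, a))
    have key1 : ∫ ω in F1, Ya a ω ∂P = (P F1).toReal * ∫ ω, Ya a ω ∂P := by
      exact aux_setIntegral P hmR hVf hrand
        (φ := fun v : V => (v.1 a).1)
        (((measurable_pi_apply a).comp measurable_fst).fst)
        (C := C) (fun ω => hC _ (hYa𝓨 a ω)) (Sum.inl a)
    have hc2 : ∫ ω in F2, Y ω ∂P = ∫ ω in F2, Yad a a ω ∂P :=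
      setIntegral_congr_fun hF2m fun ω hω => (hconsAd a a ω hω).1
    have hc1 : ∫ ω in F1, Y ω ∂P = ∫ ω in F1, Ya a ω ∂P :=
      setIntegral_congr_fun hF1m fun ω hω => (hconsA a ω hω).1
    have hmt : ∫ ω, Yad a a ω ∂P = ∫ ω, Ya a ω ∂P := integral_congr_ae (hmtY a)
    unfold condE
    rw [hc2, hc1, key2, key1, hmt,
      mul_div_cancel_left₀ _ hp2', mul_div_cancel_left₀ _ hp1']
  · -- D part
    intro k hk
    have hk2 : k + 1 < K + 2 := by omega
    have key2 : ∫ ω in F2, (Dad a a (k+1) ω : ℝ) ∂P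
        = (P F2).toReal * ∫ ω, (Dad a a (k+1) ω : ℝ) ∂P := by
      exact aux_setIntegral P hmR hVf hrand
        (φ := fun v : V => ((v.2 (a, a)).2 ⟨k+1, hk2⟩ : ℝ))
        (measurable_from_top.comp ((measurable_pi_apply (⟨k+1, hk2⟩ : Fin (K+2))).comp
          (((measurable_pi_apply (a, a)).comp measurable_snd).snd)))
        (C := 1) (fun ω => by
          show |(Dad a a (k+1) ω : ℝ)| ≤ 1
          rw [abs_of_nonneg (by positivity)]
          exact_mod_cast hDad1 a a (k+1) ω) (Sum.inr (a, a))
    have key1 : ∫ ω in F1, (Da a (k+1) ω : ℝ) ∂P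
        = (P F1).toReal * ∫ ω, (Da a (k+1) ω : ℝ) ∂P := by
      exact aux_setIntegral P hmR hVf hrand
        (φ := fun v : V => ((v.1 a).2 ⟨k+1, hk2⟩ : ℝ))
        (measurable_from_top.comp ((measurable_pi_apply (⟨k+1, hk2⟩ : Fin (K+2))).comp
          (((measurable_pi_apply a).comp measurable_fst).snd)))
        (C := 1) (fun ω => by
          show |(Da a (k+1) ω : ℝ)| ≤ 1
          rw [abs_of_nonneg (by positivity)]
          exact_mod_cast hDa1 a (k+1) ω) (Sum.inl a)
    have hc2 : ∫ ω in F2, (D (k+1) ω : ℝ) ∂P = ∫ ω in F2, (Dad a a (k+1) ω : ℝ) ∂P :=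
      setIntegral_congr_fun hF2m fun ω hω => by
        exact_mod_cast congrArg (Nat.cast : ℕ → ℝ) ((hconsAd a a ω hω).2 (k+1))
    have hc1 : ∫ ω in F1, (D (k+1) ω : ℝ) ∂P = ∫ ω in F1, (Da a (k+1) ω : ℝ) ∂P :=
      setIntegral_congr_fun hF1m fun ω hω => by
        exact_mod_cast congrArg (Nat.cast : ℕ → ℝ) ((hconsA a ω hω).2 (k+1))
    have hmt : ∫ ω, (Dad a a (k+1) ω : ℝ) ∂P = ∫ ω, (Da a (k+1) ω : ℝ) ∂P := by
      apply integral_congr_ae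
      filter_upwards [hmtD a (k+1)] with ω hω
      rw [hω]
    unfold condE
    rw [hc2, hc1, key2, key1, hmt,
      mul_div_cancel_left₀ _ hp2', mul_div_cancel_left₀ _ hp1']
end
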